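/- arXiv:1307.5718 — 5 statements merged into one kernel-verified Lean document; each statement's English description precedes it below -/
import Mathlib

section
/- Let f : K → L be a surjective group homomorphism such that the induced map f̂ : K̂ → L̂ on profinite completions is injective. Then for every group homomorphism ρ : K → G with G residually finite, there exists a (unique) homomorphism τ : L → G with ρ = τ ∘ f. -/
/-- A finite-index normal subgroup of `G`. -/
structure FinIndexNormal (G : Type*) [Group G] where
  toSubgroup : Subgroup G
  normal : toSubgroup.Normal
  finiteIndex : toSubgroup.FiniteIndex

attribute [instance] FinIndexNormal.normal FinIndexNormal.finiteIndex

/-- The profinite completion of a group `G`: the inverse limit of the quotients `G/N`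
over all finite-index normal subgroups `N` of `G`, realised as the subgroup of
compatible families inside the product of all these quotients. -/
def ProfiniteCompletion (G : Type*) [Group G] :
    Subgroup (∀ M : FinIndexNormal G, G ⧸ M.toSubgroup) where
  carrier := { x | ∀ (M M' : FinIndexNormal G) (h : M.toSubgroup ≤ M'.toSubgroup),
      QuotientGroup.map M.toSubgroup M'.toSubgroup (MonoidHom.id G)
        (fun _ hg => h hg) (x M) = x M' }
  one_mem' := by intro M M' h; simp
  mul_mem' := by
    intro a b ha hb M M' h
    simp only [Pi.mul_apply, map_mul, ha M M' h, hb M M' h]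
  inv_mem' := by
    intro a ha M M' h
    simp only [Pi.inv_apply, map_inv, ha M M' h]

/-- The natural map from a group to its profinite completion. -/
def toProfiniteCompletion (G : Type*) [Group G] : G →* ProfiniteCompletion G :=
  (Pi.monoidHom fun M : FinIndexNormal G => QuotientGroup.mk' M.toSubgroup).codRestrict
    (ProfiniteCompletion G) (fun _ _ _ _ => rfl)

/-- Pull back a finite-index normal subgroup along a group homomorphism. -/
def FinIndexNormal.comapHom {G H : Type*} [Group G] [Group H] (φ : G →* H)
    (M : FinIndexNormal H) : FinIndexNormal G :=
  ⟨M.toSubgroup.comap φ, M.normal.comap φ, ⟨by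
    rw [Subgroup.index_comap]
    intro h0
    exact M.finiteIndex.index_ne_zero
      (zero_dvd_iff.mp (h0 ▸ Subgroup.relIndex_dvd_index_of_normal M.toSubgroup φ.range))⟩⟩

/-- The homomorphism between profinite completions functorially induced by a group
homomorphism `φ : G →* H`. -/
def ProfiniteCompletion.map {G H : Type*} [Group G] [Group H] (φ : G →* H) :
    ProfiniteCompletion G →* ProfiniteCompletion H :=
  (Pi.monoidHom fun M : FinIndexNormal H =>
      (QuotientGroup.map ((M.comapHom φ).toSubgroup) M.toSubgroup φ le_rfl).comp
        ((Pi.evalMonoidHom _ (M.comapHom φ)).comp (ProfiniteCompletion G).subtype)).codRestrict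
    (ProfiniteCompletion H) (by
      intro x M M' h
      have hx := x.2 (M.comapHom φ) (M'.comapHom φ)
        (Subgroup.comap_mono (f := φ) h)
      simp only [Pi.monoidHom, MonoidHom.pi_apply, MonoidHom.comp_apply,
        Pi.evalMonoidHom_apply, Subgroup.coe_subtype] at *
      rw [← hx]
      obtain ⟨g, hg⟩ := QuotientGroup.mk'_surjective (M.comapHom φ).toSubgroup
        (x.1 (M.comapHom φ))
      rw [← hg]
      rfl)

/-!
By naturality of `G ↦ Ĝ`, `f̂ ∘ ι_K = ι_L ∘ f`, so injectivity of `f̂` puts `ker f` inside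
`ker ι_K`; likewise `ρ̂ ∘ ι_K = ι_G ∘ ρ` with `ι_G` injective puts `ker ι_K` inside `ker ρ`.
Hence `ker f ≤ ker ρ`, and `ρ` descends along the surjection `f`.
-/

theorem MonoidHom.existsUnique_comp_eq_of_surjective_of_ker_le {G₁ G₂ G₃ : Type*} [Group G₁]
    [Group G₂] [Group G₃] {f : G₁ →* G₂} (hf : Function.Surjective f) {g : G₁ →* G₃}
    (hg : f.ker ≤ g.ker) : ∃! τ : G₂ →* G₃, τ.comp f = g :=
  ⟨f.liftOfSurjective hf ⟨g, hg⟩, f.liftOfRightInverse_comp _ _ ⟨g, hg⟩,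
    fun τ hτ => f.eq_liftOfRightInverse _ _ g hg τ hτ⟩

namespace ProfiniteCompletion

variable {G H : Type*} [Group G] [Group H]

theorem map_comp_toProfiniteCompletion (φ : G →* H) :
    (map φ).comp (toProfiniteCompletion G) = (toProfiniteCompletion H).comp φ :=
  rfl

theorem ker_le_ker_toProfiniteCompletion_of_injective_map {φ : G →* H}
    (hφ : Function.Injective (map φ)) : φ.ker ≤ (toProfiniteCompletion G).ker := by
  rw [← (toProfiniteCompletion G).ker_comp_of_injective _ hφ, map_comp_toProfiniteCompletion]
  exact φ.ker_le_comap (toProfiniteCompletion H).ker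

theorem ker_toProfiniteCompletion_le_ker_of_injective (φ : G →* H)
    (hH : Function.Injective (toProfiniteCompletion H)) :
    (toProfiniteCompletion G).ker ≤ φ.ker := by
  rw [← φ.ker_comp_of_injective _ hH, ← map_comp_toProfiniteCompletion]
  exact (toProfiniteCompletion G).ker_le_comap (map φ).ker

end ProfiniteCompletion

/-- If f : K -> L is a surjective group homomorphism inducing an injective map on
profinite completions, then every homomorphism from K to a residually finite group G
factors (uniquely) through f. -/
theorem exists_unique_factorization_of_surjective_of_injective_profiniteCompletion_map
    {K L G : Type*} [Group K] [Group L] [Group G]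
    (f : K →* L) (hf : Function.Surjective f)
    (hfhat : Function.Injective (ProfiniteCompletion.map f))
    (hG : Function.Injective (toProfiniteCompletion G))
    (ρ : K →* G) :
    ∃! τ : L →* G, τ.comp f = ρ :=
  MonoidHom.existsUnique_comp_eq_of_surjective_of_ker_le hf <|
    (ProfiniteCompletion.ker_le_ker_toProfiniteCompletion_of_injective_map hfhat).trans
      (ProfiniteCompletion.ker_toProfiniteCompletion_le_ker_of_injective ρ hG)
end

section
/- Let p : W₂ → V and q : W₁ → V be covering maps between connected, locally path-connected topological spaces, and let γ : W₂ → W₁ be a continuous map with q ∘ γ = p. If for some point v ∈ V the fibers p⁻¹(v) and q⁻¹(v) are finite of equal cardinality, then γ is a homeomorphism. -/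
/-!
Since `γ` sits over the base, it is a local homeomorphism, hence open. It is surjective because a
path in `W₁` from a point of the range to any `w` projects to `V`, lifts through `p`, and `γ`
carries the lift to a `q`-lift of the same path with the same start, i.e. back to the original
path by uniqueness of lifts. Over a connected base all fibers of a covering map are equipotent, so
`p` and `q` have fibers of the same finite cardinality everywhere; `γ` maps each fiber of `p` onto
the corresponding fiber of `q`, and a surjection between finite sets of equal size is injective.
-/

open Set Function Topology

namespace IsEvenlyCovered

variable {E X I : Type*} [TopologicalSpace E] [TopologicalSpace X] [TopologicalSpace I]
  {f : E → X} {x : X}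

theorem eventually_isEvenlyCovered (h : IsEvenlyCovered f x I) :
    ∀ᶠ y in 𝓝 x, IsEvenlyCovered f y I := by
  obtain ⟨hI, U, hxU, hU, hfU, H, hH⟩ := h
  filter_upwards [hU.mem_nhds hxU] with y hyU using ⟨hI, U, hyU, hU, hfU, H, hH⟩

end IsEvenlyCovered

theorem Function.Surjective.injOn_preimage_of_ncard_eq {E F : Type*} {γ : E → F} {t : Set F}
    (hγ : Surjective γ) (hfin : (γ ⁻¹' t).Finite) (hcard : (γ ⁻¹' t).ncard = t.ncard) :
    InjOn γ (γ ⁻¹' t) :=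
  injOn_of_ncard_image_eq (by rw [image_preimage_eq t hγ, hcard]) hfin

namespace IsCoveringMap

variable {E F X : Type*} [TopologicalSpace E] [TopologicalSpace F] [TopologicalSpace X]
  {p : E → X} {q : F → X} {γ : E → F}

theorem nonempty_equiv_fiber [PreconnectedSpace X] (hp : IsCoveringMap p) (x y : X) :
    Nonempty (p ⁻¹' {x} ≃ p ⁻¹' {y}) := by
  refine PreconnectedSpace.induction₂' (fun x y ↦ Nonempty (p ⁻¹' {x} ≃ p ⁻¹' {y})) (fun x ↦ ?_)
    ⟨fun _ _ _ ⟨e⟩ ⟨e'⟩ ↦ ⟨e.trans e'⟩⟩ x y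
  filter_upwards [(hp x).eventually_isEvenlyCovered] with y hy
  exact ⟨⟨hy.fiberHomeomorph.toEquiv⟩, ⟨hy.fiberHomeomorph.toEquiv.symm⟩⟩

theorem surjective_of_comp_eq [Nonempty E] [PathConnectedSpace F] (hp : IsCoveringMap p)
    (hq : IsCoveringMap q) (hγ : Continuous γ) (hcomp : q ∘ γ = p) : Surjective γ := by
  intro w
  obtain ⟨y₀⟩ := ‹Nonempty E›
  let c := PathConnectedSpace.somePath (γ y₀) w
  have hc₀ : (⟨q, hq.continuous⟩ : C(F, X)).comp (c : C(unitInterval, F)) 0 = p y₀ := by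
    simp [← hcomp]
  let Γ := hp.liftPath _ y₀ hc₀
  have hγΓ : γ ∘ Γ = c := hq.eq_of_comp_eq (hγ.comp Γ.continuous) c.continuous
    (by rw [← comp_assoc, hcomp, hp.liftPath_lifts]; rfl) 0 (by simp [Γ, hp.liftPath_zero])
  exact ⟨Γ 1, by simpa using congrFun hγΓ 1⟩

theorem injective_of_comp_eq [PreconnectedSpace X] (hp : IsCoveringMap p) (hq : IsCoveringMap q)
    (hsurj : Surjective γ) (hcomp : q ∘ γ = p) (v : X) (hpfin : (p ⁻¹' {v}).Finite)
    (hcard : Nat.card (p ⁻¹' {v}) = Nat.card (q ⁻¹' {v})) : Injective γ := by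
  intro a b hab
  have hfib : p ⁻¹' {p a} = γ ⁻¹' (q ⁻¹' {p a}) := by rw [← preimage_comp, hcomp]
  obtain ⟨ep⟩ := hp.nonempty_equiv_fiber v (p a)
  obtain ⟨eq⟩ := hq.nonempty_equiv_fiber v (p a)
  have hfin : (p ⁻¹' {p a}).Finite :=
    have := hpfin.to_subtype
    have := Finite.of_equiv _ ep
    toFinite _
  have hcard' : (p ⁻¹' {p a}).ncard = (q ⁻¹' {p a}).ncard := by
    simpa only [← Nat.card_coe_set_eq, Nat.card_congr ep, Nat.card_congr eq] using hcard
  rw [hfib] at hfin hcard'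
  refine hsurj.injOn_preimage_of_ncard_eq hfin hcard' ?_ ?_ hab
  · exact congrFun hcomp a
  · rw [mem_preimage, ← hab]; exact congrFun hcomp a

end IsCoveringMap

theorem isHomeomorph_of_coveringMaps_of_card_fiber_eq_general
    {V W₁ W₂ : Type*} [TopologicalSpace V] [TopologicalSpace W₁] [TopologicalSpace W₂]
    [ConnectedSpace V] [ConnectedSpace W₁] [ConnectedSpace W₂]
    [LocallyPathConnectedSpace W₁]
    (p : W₂ → V) (q : W₁ → V) (γ : W₂ → W₁)
    (hp : IsCoveringMap p) (hq : IsCoveringMap q)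
    (hγ : Continuous γ) (hcomp : q ∘ γ = p)
    (v : V) (hpfin : (p ⁻¹' {v}).Finite)
    (hcard : Nat.card (p ⁻¹' {v}) = Nat.card (q ⁻¹' {v})) :
    IsHomeomorph γ := by
  have : PathConnectedSpace W₁ := pathConnectedSpace_iff_connectedSpace.mpr ‹_›
  have hsurj := hp.surjective_of_comp_eq hq hγ hcomp
  have hopen : IsOpenMap γ :=
    (IsLocalHomeomorph.of_comp (hcomp ▸ hp.isLocalHomeomorph) hq.isLocalHomeomorph hγ).isOpenMap
  exact ⟨hγ, hopen, hp.injective_of_comp_eq hq hsurj hcomp v hpfin hcard, hsurj⟩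

/-- Let `p : W₂ → V` and `q : W₁ → V` be covering maps between connected, locally
path-connected spaces and let `γ : W₂ → W₁` be continuous with `q ∘ γ = p`.  If for some
point `v ∈ V` the fibers `p⁻¹(v)` and `q⁻¹(v)` are finite of equal cardinality, then `γ`
is a homeomorphism. -/
theorem isHomeomorph_of_coveringMaps_of_card_fiber_eq
    {V W₁ W₂ : Type*} [TopologicalSpace V] [TopologicalSpace W₁] [TopologicalSpace W₂]
    [ConnectedSpace V] [ConnectedSpace W₁] [ConnectedSpace W₂]
    [LocallyPathConnectedSpace V] [LocallyPathConnectedSpace W₁] [LocallyPathConnectedSpace W₂]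
    (p : W₂ → V) (q : W₁ → V) (γ : W₂ → W₁)
    (hp : IsCoveringMap p) (hq : IsCoveringMap q)
    (hγ : Continuous γ) (hcomp : q ∘ γ = p)
    (v : V) (hpfin : (p ⁻¹' {v}).Finite) (hqfin : (q ⁻¹' {v}).Finite)
    (hcard : Nat.card (p ⁻¹' {v}) = Nat.card (q ⁻¹' {v})) :
    IsHomeomorph γ :=
  isHomeomorph_of_coveringMaps_of_card_fiber_eq_general p q γ hp hq hγ hcomp v hpfin hcard
end

section
/- Let R be a commutative ring and h ∈ R such that R/(h) is an integral domain. Let F ⊆ R^n be a submodule such that h is a nonzerodivisor on the quotient R^n/F. Then the natural map F ⊗_R R/(h) → (R/(h))^n is injective; consequently F ⊗_R R/(h) is a torsion-free R/(h)-module. -/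
open TensorProduct

variable {R : Type*} [CommRing R]

/-- The natural map `F ⊗_R R/(h) → (R/(h))ⁿ` (written with the scalar factor on the
left) induced by the inclusion `F ⊆ Rⁿ` and the quotient map `R → R/(h)`. -/
noncomputable def naturalBaseChangeMap (h : R) {n : ℕ} (F : Submodule R (Fin n → R)) :
    ((R ⧸ Ideal.span {h}) ⊗[R] F) →ₗ[R] (Fin n → R ⧸ Ideal.span {h}) :=
  TensorProduct.lift <| LinearMap.mk₂ R
    (fun q f i => q * Ideal.Quotient.mk (Ideal.span {h}) ((f : Fin n → R) i))
    (fun q q' f => by funext i; exact add_mul _ _ _)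
    (fun c q f => by funext i; exact smul_mul_assoc c q _)
    (fun q f g => by
      funext i
      show q * Ideal.Quotient.mk _ ((f : Fin n → R) i + (g : Fin n → R) i) = _
      rw [map_add, mul_add]; rfl)
    (fun c q f => by
      funext i
      show q * Ideal.Quotient.mk _ ((c • (f : Fin n → R)) i) = c • (q * _)
      rw [Pi.smul_apply, smul_eq_mul, map_mul, ← mul_assoc, mul_comm q, mul_assoc,
        ← Ideal.Quotient.algebraMap_eq, ← Algebra.smul_def])

lemma naturalBaseChangeMap_tmul (h : R) {n : ℕ} (F : Submodule R (Fin n → R))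
    (q : R ⧸ Ideal.span {h}) (f : F) :
    naturalBaseChangeMap h F (q ⊗ₜ f) =
      fun i => q * Ideal.Quotient.mk (Ideal.span {h}) ((f : Fin n → R) i) := by
  simp [naturalBaseChangeMap]

lemma naturalBaseChangeMap_exists_rep (h : R) {n : ℕ} (F : Submodule R (Fin n → R))
    (z : (R ⧸ Ideal.span {h}) ⊗[R] F) :
    ∃ f : F, z = (1 : R ⧸ Ideal.span {h}) ⊗ₜ[R] f := by
  induction z using TensorProduct.induction_on with
  | zero => exact ⟨0, (TensorProduct.tmul_zero _ _).symm⟩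
  | tmul q f =>
    obtain ⟨r, rfl⟩ := Ideal.Quotient.mk_surjective q
    refine ⟨r • f, ?_⟩
    have h1 : (Ideal.Quotient.mk (Ideal.span {h}) r : R ⧸ Ideal.span {h}) =
        r • (1 : R ⧸ Ideal.span {h}) := by
      rw [Algebra.smul_def, Ideal.Quotient.algebraMap_eq, mul_one]
    rw [h1, TensorProduct.smul_tmul]
  | add x y hx hy =>
    obtain ⟨f, rfl⟩ := hx
    obtain ⟨g, rfl⟩ := hy
    exact ⟨f + g, (TensorProduct.tmul_add _ _ _).symm⟩

set_option synthInstance.maxHeartbeats 1000000 in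
/-- Let `h ∈ R` be such that `R/(h)` is an integral domain, and let `F ⊆ Rⁿ` be a
submodule such that `h` is a nonzerodivisor on `Rⁿ/F`.  Then the natural map
`F ⊗_R R/(h) → (R/(h))ⁿ` is injective; consequently `F ⊗_R R/(h)` is a torsion-free
`R/(h)`-module. -/
theorem naturalBaseChangeMap_injective_and_torsionFree
    (h : R) {n : ℕ} (F : Submodule R (Fin n → R))
    (hdom : IsDomain (R ⧸ Ideal.span {h}))
    (hreg : ∀ x : Fin n → R, h • x ∈ F → x ∈ F) :
    Function.Injective (naturalBaseChangeMap h F) ∧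
      NoZeroSMulDivisors (R ⧸ Ideal.span {h}) ((R ⧸ Ideal.span {h}) ⊗[R] F) := by
  haveI := hdom
  have hinj : Function.Injective (naturalBaseChangeMap h F) := by
    rw [← LinearMap.ker_eq_bot (M := (R ⧸ Ideal.span {h}) ⊗[R] F), LinearMap.ker_eq_bot']
    intro z hz
    obtain ⟨f, rfl⟩ := naturalBaseChangeMap_exists_rep h F z
    rw [naturalBaseChangeMap_tmul] at hz
    have hz' : ∀ i, Ideal.Quotient.mk (Ideal.span {h}) ((f : Fin n → R) i) = 0 := by
      intro i
      have := congrFun hz i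
      simpa using this
    have hx : ∀ i, ∃ c, (f : Fin n → R) i = h * c := by
      intro i
      have hmem : (f : Fin n → R) i ∈ Ideal.span {h} := by
        rw [← Ideal.Quotient.eq_zero_iff_mem]; exact hz' i
      obtain ⟨c, hc⟩ := Ideal.mem_span_singleton'.mp hmem
      exact ⟨c, by rw [← hc]; ring⟩
    choose c hc using hx
    have hcF : c ∈ F := by
      apply hreg
      have : h • c = (f : Fin n → R) := by
        funext i; simp [Pi.smul_apply, smul_eq_mul, hc i]
      rw [this]; exact f.2
    have hf : f = h • (⟨c, hcF⟩ : F) := by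
      apply Subtype.ext
      funext i
      simpa using hc i
    rw [hf, TensorProduct.tmul_smul, TensorProduct.smul_tmul']
    have hzero : h • (1 : R ⧸ Ideal.span {h}) = 0 := by
      rw [Algebra.smul_def, Ideal.Quotient.algebraMap_eq, mul_one,
        Ideal.Quotient.eq_zero_iff_mem]
      exact Ideal.mem_span_singleton_self h
    rw [hzero, TensorProduct.zero_tmul]
  refine ⟨hinj, ⟨fun {q z} hqz => ?_⟩⟩
  obtain ⟨f, rfl⟩ := naturalBaseChangeMap_exists_rep h F z
  have hq1 : q • ((1 : R ⧸ Ideal.span {h}) ⊗ₜ[R] f) = q ⊗ₜ[R] f := by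
    rw [TensorProduct.smul_tmul', smul_eq_mul, mul_one]
  have h3 : q • naturalBaseChangeMap h F ((1 : R ⧸ Ideal.span {h}) ⊗ₜ f) = 0 := by
    have h2 : naturalBaseChangeMap h F (q ⊗ₜ f) =
        q • naturalBaseChangeMap h F ((1 : R ⧸ Ideal.span {h}) ⊗ₜ f) := by
      funext i
      simp [naturalBaseChangeMap_tmul, Pi.smul_apply, smul_eq_mul, mul_assoc]
    rw [← h2, ← hq1, hqz, map_zero]
  rcases smul_eq_zero.mp h3 with hq | hm
  · exact Or.inl hq
  · exact Or.inr (hinj (by rw [hm, map_zero]))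
end

section
/- Let M be an abelian group, c : M^k → ℤ a symmetric multilinear form, and S ⊆ M a subset such that c(A₁,…,A_k) ≥ 0 whenever all A_i ∈ S. Suppose H₁,…,H_k, L₁,…,L_k ∈ M satisfy H_i ∈ S, L_i ∈ S, H_i + L_i ∈ S and H_i − L_i ∈ S for all i, and c(H₁,…,H_k) = 0. Then c(L₁,…,L_k) = 0. -/
/-- Abstract positivity argument: if a symmetric multilinear integer-valued form `c` on an
abelian group `M` is nonnegative on tuples from a set `S`, and `H i, L i, H i + L i,
H i - L i` all lie in `S`, then `c H = 0` implies `c L = 0`. -/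
theorem multilinear_nonneg_vanishing
    {M : Type*} [AddCommGroup M] {k : ℕ} (c : (Fin k → M) → ℤ) (S : Set M)
    (hsymm : ∀ (A : Fin k → M) (σ : Equiv.Perm (Fin k)), c (A ∘ σ) = c A)
    (hadd : ∀ (A : Fin k → M) (i : Fin k) (x y : M),
      c (Function.update A i (x + y)) = c (Function.update A i x) + c (Function.update A i y))
    (hpos : ∀ A : Fin k → M, (∀ i, A i ∈ S) → 0 ≤ c A)
    (H L : Fin k → M)
    (hH : ∀ i, H i ∈ S) (hL : ∀ i, L i ∈ S)
    (hsum : ∀ i, H i + L i ∈ S) (hdiff : ∀ i, H i - L i ∈ S)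
    (hzero : c H = 0) :
    c L = 0 := by
  have key : ∀ m : ℕ, m ≤ k → c (fun i => if i.val < m then L i else H i) = 0 := by
    intro m
    induction m with
    | zero =>
      intro _
      have : (fun i : Fin k => if i.val < 0 then L i else H i) = H := by
        funext i; simp
      rw [this]; exact hzero
    | succ m ih =>
      intro hm
      have hm' : m < k := hm
      set i0 : Fin k := ⟨m, hm'⟩ with hi0
      set B : Fin k → M := fun i => if i.val < m then L i else H i with hB
      have hBmem : ∀ j, B j ∈ S := by
        intro j
        by_cases h : j.val < m <;> simp [hB, h, hL j, hH j]
      have hBi0 : B i0 = H i0 := by simp [hB, hi0]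
      have hBupd : Function.update B i0 (H i0) = B := by
        rw [← hBi0]; exact Function.update_eq_self _ _
      have hcB : c B = 0 := ih hm'.le
      have hmemupd : ∀ x, x ∈ S → ∀ j, Function.update B i0 x j ∈ S := by
        intro x hx j
        rcases eq_or_ne j i0 with rfl | h
        · simpa using hx
        · rw [Function.update_of_ne h]; exact hBmem j
      have h1 : 0 ≤ c (Function.update B i0 (H i0 + L i0)) :=
        hpos _ (hmemupd _ (hsum i0))
      have h2 : 0 ≤ c (Function.update B i0 (H i0 - L i0)) :=
        hpos _ (hmemupd _ (hdiff i0))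
      have e1 : c (Function.update B i0 ((H i0 + L i0) + (H i0 - L i0)))
          = c (Function.update B i0 (H i0 + L i0)) + c (Function.update B i0 (H i0 - L i0)) :=
        hadd B i0 _ _
      have e2 : c (Function.update B i0 (H i0 + H i0))
          = c (Function.update B i0 (H i0)) + c (Function.update B i0 (H i0)) :=
        hadd B i0 _ _
      have harg : (H i0 + L i0) + (H i0 - L i0) = H i0 + H i0 := by abel
      rw [harg, e2, hBupd, hcB] at e1
      have hsum0 : c (Function.update B i0 (H i0 + L i0)) +
          c (Function.update B i0 (H i0 - L i0)) = 0 := by omega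
      have hHL0 : c (Function.update B i0 (H i0 + L i0)) = 0 := by omega
      have e3 : c (Function.update B i0 (H i0 + L i0))
          = c (Function.update B i0 (H i0)) + c (Function.update B i0 (L i0)) :=
        hadd B i0 _ _
      rw [hHL0, hBupd, hcB] at e3
      have hL0 : c (Function.update B i0 (L i0)) = 0 := by omega
      have hfin : Function.update B i0 (L i0)
          = fun i : Fin k => if i.val < m + 1 then L i else H i := by
        funext j
        rcases eq_or_ne j i0 with rfl | h
        · simp [hi0]
        · have : j.val ≠ m := fun hc => h (Fin.ext hc)
          rw [Function.update_of_ne h, hB]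
          by_cases hj : j.val < m
          · simp [hj, Nat.lt_succ_of_lt hj]
          · have : ¬ j.val < m + 1 := by omega
            simp [hj, this]
      rw [← hfin]; exact hL0
  have : (fun i : Fin k => if i.val < k then L i else H i) = L := by
    funext i; simp [i.isLt]
  rw [← this]; exact key k le_rfl
end

section
/- Every finitely generated subgroup of GL(n, ℂ) is residually finite. -/
/-!
The entries of the generators of `H` and of their inverses generate a finitely generated ring
`R ⊆ ℂ` with `H ⊆ GL_n(R)`. Since `ℤ` is a Jacobson ring, so is `R`, and every residue field of
`R` at a maximal ideal is a field finitely generated over `ℤ`, hence finite. As `R` is reduced,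
its Jacobson radical vanishes, so a nonzero entry of `g - 1` survives modulo some maximal ideal
`m`, and reduction modulo `m` is a map to the finite group `GL_n(R/m)` that does not kill `g`.
-/

open Function

instance Int.isJacobsonRing : IsJacobsonRing ℤ := by
  refine isJacobsonRing_iff_prime_eq.mpr fun P hP ↦ ?_
  rcases eq_or_ne P ⊥ with rfl | hP0
  · refine le_antisymm (fun x hx ↦ Ideal.mem_bot.mpr ?_) Ideal.le_jacobson
    rcases Int.isUnit_iff.mp (Ideal.mem_jacobson_bot.mp hx x) with h | h
    · exact mul_self_eq_zero.mp (by linarith)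
    · nlinarith [mul_self_nonneg x]
  · have := hP.isMaximal hP0
    exact P.jacobson_eq_self_of_isMaximal

theorem finite_of_finiteType_int (k : Type*) [Field k] [Algebra.FiniteType ℤ k] : Finite k := by
  have : Module.Finite ℤ k := finite_of_finite_type_of_isJacobsonRing ℤ k
  obtain ⟨p, hp⟩ := CharP.exists k
  rcases CharP.char_is_prime_or_zero k p with hprime | rfl
  · have : Fact p.Prime := ⟨hprime⟩
    let := ZMod.algebra k p
    have : Module.Finite (ZMod p) k := .of_restrictScalars_finite ℤ (ZMod p) k
    exact Module.finite_of_finite (ZMod p)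
  · -- a field integral over `ℤ` containing `ℤ` would make `ℤ` a field
    have : CharZero k := CharP.charP_to_charZero k
    exact absurd ((Algebra.IsIntegral.isField_iff_isField (Int.cast_injective (α := k))).mpr
      (Field.toIsField k)) Int.not_isField

theorem exists_isMaximal_notMem_finite_quotient {R : Type*} [CommRing R] [Algebra.FiniteType ℤ R]
    {x : R} (hx : ¬IsNilpotent x) : ∃ m : Ideal R, m.IsMaximal ∧ x ∉ m ∧ Finite (R ⧸ m) := by
  have : IsJacobsonRing R := isJacobsonRing_of_finiteType (A := ℤ)
  have hxj : x ∉ (⊥ : Ideal R).jacobson := by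
    rw [← Ideal.radical_eq_jacobson]
    exact mt mem_nilradical.mp hx
  rw [Ideal.jacobson, Ideal.mem_sInf] at hxj
  push Not at hxj
  obtain ⟨m, ⟨-, hm⟩, hxm⟩ := hxj
  refine ⟨m, hm, hxm, ?_⟩
  have hfin : Algebra.FiniteType ℤ (R ⧸ m) :=
    .of_surjective (Ideal.Quotient.mkₐ ℤ m) Ideal.Quotient.mk_surjective
  -- `hfin` uses the quotient's own `ℤ`-algebra, not syntactically the one induced by the field
  exact @finite_of_finiteType_int (R ⧸ m) (Ideal.Quotient.field m) hfin

namespace Group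

theorem ResiduallyFinite.of_injective {G G' : Type*} [Group G] [Group G'] [ResiduallyFinite G']
    {f : G →* G'} (hf : Injective f) : ResiduallyFinite G := by
  refine residuallyFinite_iff_forall_finiteIndexNormalSubgroup.mpr fun g hg ↦ hf ?_
  rw [map_one]
  exact eq_one_iff_forall_finiteIndexNormalSubroup (f g) fun K ↦ hg (K.comap f)

theorem exists_finite_monoidHom_ne_one {G : Type u} [Group G] [ResiduallyFinite G] {g : G}
    (hg : g ≠ 1) : ∃ (F : Type u) (_ : Group F) (_ : Finite F) (η : G →* F), η g ≠ 1 := by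
  obtain ⟨N, hgN⟩ := exists_finiteIndexNormalSubgroup_notMem g hg
  exact ⟨G ⧸ N.toSubgroup, inferInstance, Subgroup.finite_quotient_of_finiteIndex,
    QuotientGroup.mk' _, by rwa [Ne, QuotientGroup.mk'_apply, QuotientGroup.eq_one_iff]⟩

end Group

namespace Matrix.GeneralLinearGroup

variable {n : Type*} [Fintype n] [DecidableEq n]

theorem map_injective {R S : Type*} [CommRing R] [CommRing S] {f : R →+* S} (hf : Injective f) :
    Injective (map (n := n) f) := fun g h hgh ↦
  ext fun i j ↦ hf <| by simpa only [GeneralLinearGroup.map_apply] using congr($hgh i j)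

theorem mem_range_map_val {k A : Type*} [CommRing k] [CommRing A] [Algebra k A]
    (R : Subalgebra k A) {g : GL n A} (hg : ∀ i j, g i j ∈ R) (hg' : ∀ i j, g⁻¹ i j ∈ R) :
    g ∈ (map (R.val : R →+* A)).range := by
  let φ := (R.val : R →+* A).mapMatrix (m := n)
  have hφ : Injective φ := Matrix.map_injective Subtype.val_injective
  let M : Matrix n n R := of fun i j ↦ ⟨g i j, hg i j⟩
  let M' : Matrix n n R := of fun i j ↦ ⟨g⁻¹ i j, hg' i j⟩
  have hM : φ M = g := rfl
  have hM' : φ M' = ↑g⁻¹ := rfl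
  have hMM' : M * M' = 1 := hφ <| by
    rw [map_mul, map_one, hM, hM', ← coe_mul, mul_inv_cancel, coe_one]
  have hM'M : M' * M = 1 := hφ <| by
    rw [map_mul, map_one, hM, hM', ← coe_mul, inv_mul_cancel, coe_one]
  exact ⟨⟨M, M', hMM', hM'M⟩, Units.ext hM⟩

theorem exists_finiteType_subalgebra_le_range_map {k A : Type*} [CommRing k] [CommRing A]
    [Algebra k A] {H : Subgroup (GL n A)} (hH : H.FG) :
    ∃ R : Subalgebra k A, Algebra.FiniteType k R ∧ H ≤ (map (R.val : R →+* A)).range := by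
  obtain ⟨S, rfl, hS⟩ := (Subgroup.fg_iff H).mp hH
  let T : Set A := ⋃ s ∈ S,
    Set.range (fun p : n × n ↦ s p.1 p.2) ∪ Set.range (fun p : n × n ↦ s⁻¹ p.1 p.2)
  have hT : T.Finite := hS.biUnion fun _ _ ↦ (Set.finite_range _).union (Set.finite_range _)
  refine ⟨Algebra.adjoin k T, .adjoin_of_finite hT, (Subgroup.closure_le _).mpr fun s hs ↦ ?_⟩
  exact mem_range_map_val _
    (fun i j ↦ Algebra.subset_adjoin <| Set.mem_biUnion hs <| .inl ⟨(i, j), rfl⟩)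
    (fun i j ↦ Algebra.subset_adjoin <| Set.mem_biUnion hs <| .inr ⟨(i, j), rfl⟩)

theorem residuallyFinite_of_finiteType (R : Type*) [CommRing R] [IsReduced R]
    [Algebra.FiniteType ℤ R] : Group.ResiduallyFinite (GL n R) := by
  refine Group.residuallyFinite_of_forall_exists_finite_monoidHom fun g hg ↦ ?_
  obtain ⟨i, j, hij⟩ : ∃ i j, g i j ≠ (1 : GL n R) i j := by
    by_contra! h
    exact hg (ext h)
  obtain ⟨m, -, hm, _⟩ := exists_isMaximal_notMem_finite_quotient
    (x := g i j - (1 : GL n R) i j) fun h ↦ hij (sub_eq_zero.mp h.eq_zero)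
  refine ⟨GL n (R ⧸ m), inferInstance, inferInstance, map (Ideal.Quotient.mk m), fun h ↦ hm ?_⟩
  rw [← Ideal.Quotient.eq, ← GeneralLinearGroup.map_apply, ← GeneralLinearGroup.map_apply, h,
    map_one]

end Matrix.GeneralLinearGroup

open Matrix.GeneralLinearGroup in
/-- Malcev's theorem: every finitely generated subgroup of `GL(n, ℂ)` is residually
finite: every nontrivial element is detected by a homomorphism to a finite group. -/
theorem fg_subgroup_of_GL_residually_finite
    (n : ℕ) (H : Subgroup (Matrix.GeneralLinearGroup (Fin n) ℂ)) (hfg : Group.FG H) :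
    ∀ g : H, g ≠ 1 →
      ∃ (F : Type) (_ : Group F) (_ : Finite F) (η : H →* F), η g ≠ 1 := by
  obtain ⟨R, _, hHR⟩ :=
    exists_finiteType_subalgebra_le_range_map (k := ℤ) ((Group.fg_iff_subgroup_fg H).mp hfg)
  have := residuallyFinite_of_finiteType (n := Fin n) R
  have hval : Injective (map (n := Fin n) (R.val : R →+* ℂ)) := map_injective Subtype.val_injective
  let ι := (MonoidHom.ofInjective hval).symm
  have : Group.ResiduallyFinite H :=
    .of_injective (f := ι.toMonoidHom.comp (Subgroup.inclusion hHR))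
      (ι.injective.comp (Subgroup.inclusion_injective hHR))
  exact fun g hg ↦ Group.exists_finite_monoidHom_ne_one hg
end
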